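/- With F, a, b, S_w, E, G as in the standing setup, for every g ∈ G and all w, w' ∈ F, the number of elements x ∈ G with x g x⁻¹ ∈ S_w equals the number of elements x ∈ G with x g x⁻¹ ∈ S_{w'}. Equivalently, g fixes the same number of cosets in the coset action of G on the cosets of S_w as in the coset action on the cosets of S_{w'}; hence every element of G has the same number of fixed points in each of the |F| pairwise inequivalent 2-transitive actions of degree |F|². -/

import Mathlib

/-- The matrix `X = [[1,0,0],[0,a,0],[0,0,a⁻¹]]`. -/
def Xmat (F : Type*) [Field F] (a : F) : Matrix (Fin 3) (Fin 3) F :=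
  !![1, 0, 0; 0, a, 0; 0, 0, a⁻¹]

/-- The matrix `Y_w = [[1,0,v],[0,1,1],[0,0,1]]` with `v = w + wa`. -/
def Ymat (F : Type*) [Field F] (a w : F) : Matrix (Fin 3) (Fin 3) F :=
  !![1, 0, w + w * a; 0, 1, 1; 0, 0, 1]

/-- The matrix `Z_w = [[1,w,u],[0,b,b²+b+1],[0,1,b+1]]` with `u = wa + wb + w`. -/
def Zmat (F : Type*) [Field F] (a b w : F) : Matrix (Fin 3) (Fin 3) F :=
  !![1, w, w * a + w * b + w; 0, b, b ^ 2 + b + 1; 0, 1, b + 1]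

/-- The matrix `e(n) = [[1,v₁,v₂],[0,1,0],[0,0,1]]` for `n = (v₁,v₂) ∈ F²`. -/
def eMat (F : Type*) [Field F] (v₁ v₂ : F) : Matrix (Fin 3) (Fin 3) F :=
  !![1, v₁, v₂; 0, 1, 0; 0, 0, 1]

/-- The subgroup `S_w` of `SL(3,F)` generated by `X`, `Y_w` and `Z_w`. -/
def Ssub (F : Type*) [Field F] (a b w : F) :
    Subgroup (Matrix.SpecialLinearGroup (Fin 3) F) :=
  Subgroup.closure {g | (g : Matrix (Fin 3) (Fin 3) F) = Xmat F a ∨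
    (g : Matrix (Fin 3) (Fin 3) F) = Ymat F a w ∨
    (g : Matrix (Fin 3) (Fin 3) F) = Zmat F a b w}

/-- The set `E = {e(n) : n ∈ F²}` inside `SL(3,F)`. -/
def ESet (F : Type*) [Field F] : Set (Matrix.SpecialLinearGroup (Fin 3) F) :=
  {g | ∃ v₁ v₂ : F, (g : Matrix (Fin 3) (Fin 3) F) = eMat F v₁ v₂}

/-- The subgroup `G` of `SL(3,F)` generated by `E` together with `X`, `Y₀` and `Z₀`. -/
def Gsub (F : Type*) [Field F] (a b : F) :
    Subgroup (Matrix.SpecialLinearGroup (Fin 3) F) :=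
  Subgroup.closure (ESet F ∪ {g | (g : Matrix (Fin 3) (Fin 3) F) = Xmat F a ∨
    (g : Matrix (Fin 3) (Fin 3) F) = Ymat F a 0 ∨
    (g : Matrix (Fin 3) (Fin 3) F) = Zmat F a b 0})

/-!
Every element of `G` fixes the first basis vector, so `G` lies in the stabiliser
`P ≅ F² ⋊ SL(2, F)`. As `F` is perfect of characteristic 2, the map
`δ [[p, q], [r, s]] = (√(pr), √(qs))` is a 1-cocycle of `SL(2, F)` with values in `F²`, hence for
every `c` the twist `M ↦ M · e(c δ(A_M))` is an involutive automorphism of `P` preserving `G`.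
For `c = w (1 + a)` it fixes `X` and sends `Y_u, Z_u` to `Y_{u+w}, Z_{u+w}`, so it carries `S_0`
onto `S_w`. Although `δ` is not a coboundary, each value `δ(A)` lies in the image of `A + 1`;
hence the twist of `g` equals `t g t⁻¹` for some `t ∈ E`, and `x ↦ twist(x) · t` is a bijection
of `G` carrying `{x | x g x⁻¹ ∈ S_0}` onto `{x | x g x⁻¹ ∈ S_w}`.
-/

open Matrix MatrixGroups

section ConjugationCount

variable {Γ : Type*} [Group Γ]

theorem card_conj_mem_eq_of_mulEquiv {K S S' : Subgroup Γ} (φ : K ≃* K)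
    (hφ : ∀ x : K, (x : Γ) ∈ S ↔ (φ x : Γ) ∈ S') {g t : K} (ht : φ g = t * g * t⁻¹) :
    Nat.card {x : Γ | x ∈ K ∧ x * g * x⁻¹ ∈ S} = Nat.card {x : Γ | x ∈ K ∧ x * g * x⁻¹ ∈ S'} := by
  have key : ∀ x : K, ((x * g * x⁻¹ : K) : Γ) ∈ S ↔
      ((φ x * t * g * (φ x * t)⁻¹ : K) : Γ) ∈ S' := by
    intro x
    rw [hφ, map_mul, map_mul, map_inv, ht]
    group
  exact Nat.card_congr <|
    (Equiv.subtypeSubtypeEquivSubtypeInter (· ∈ K) (fun x => x * g * x⁻¹ ∈ S)).symm.trans <|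
      ((φ.toEquiv.trans (Equiv.mulRight t)).subtypeEquiv key).trans <|
        Equiv.subtypeSubtypeEquivSubtypeInter (· ∈ K) (fun x => x * g * x⁻¹ ∈ S')

end ConjugationCount

namespace SLThree

variable {F : Type*} [Field F]

def firstBasisStab (F : Type*) [Field F] : Subgroup SL(3, F) :=
  MulAction.stabilizer SL(3, F) (Pi.single 0 1 : Fin 3 → F)

theorem mem_firstBasisStab_iff {M : SL(3, F)} :
    M ∈ firstBasisStab F ↔ M 0 0 = 1 ∧ M 1 0 = 0 ∧ M 2 0 = 0 := by
  rw [firstBasisStab, MulAction.mem_stabilizer_iff]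
  change (M : Matrix (Fin 3) (Fin 3) F) • (Pi.single 0 1 : Fin 3 → F) = Pi.single 0 1 ↔ _
  simp [funext_iff, Fin.forall_fin_succ]

theorem exists_eq_of_mem_firstBasisStab {M : SL(3, F)} (hM : M ∈ firstBasisStab F) :
    ∃ x₁ x₂ p q r s : F,
      (M : Matrix (Fin 3) (Fin 3) F) = !![1, x₁, x₂; 0, p, q; 0, r, s] ∧ p * s - q * r = 1 := by
  obtain ⟨h0, h1, h2⟩ := mem_firstBasisStab_iff.mp hM
  refine ⟨M 0 1, M 0 2, M 1 1, M 1 2, M 2 1, M 2 2, ?_, ?_⟩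
  · simpa [h0, h1, h2] using Matrix.eta_fin_three (M : Matrix (Fin 3) (Fin 3) F)
  · have hdet := M.2
    rw [Matrix.det_fin_three, h0, h1, h2] at hdet
    linear_combination hdet

theorem mem_firstBasisStab_of_coe_eq {M : SL(3, F)} {x₁ x₂ p q r s : F}
    (hM : (M : Matrix (Fin 3) (Fin 3) F) = !![1, x₁, x₂; 0, p, q; 0, r, s]) :
    M ∈ firstBasisStab F := by
  simp [mem_firstBasisStab_iff, hM]

def eSL (v₁ v₂ : F) : SL(3, F) :=
  ⟨eMat F v₁ v₂, by simp [eMat, Matrix.det_fin_three]⟩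

@[simp]
theorem coe_eSL (v₁ v₂ : F) : (eSL v₁ v₂ : Matrix (Fin 3) (Fin 3) F) = eMat F v₁ v₂ := rfl

theorem eSL_mem_firstBasisStab (v₁ v₂ : F) : eSL v₁ v₂ ∈ firstBasisStab F :=
  mem_firstBasisStab_of_coe_eq (coe_eSL v₁ v₂)

theorem eSL_zero : (eSL 0 0 : SL(3, F)) = 1 := by
  ext i j
  fin_cases i <;> fin_cases j <;> simp [eMat]

theorem eSL_mul_eSL (v₁ v₂ u₁ u₂ : F) : eSL v₁ v₂ * eSL u₁ u₂ = eSL (v₁ + u₁) (v₂ + u₂) := by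
  ext i j
  fin_cases i <;> fin_cases j <;> simp [eMat, Matrix.mul_apply, Fin.sum_univ_three, add_comm]

theorem eSL_mul_of_mem_firstBasisStab {M : SL(3, F)} (hM : M ∈ firstBasisStab F) (v₁ v₂ : F) :
    eSL v₁ v₂ * M = M * eSL (v₁ * M 1 1 + v₂ * M 2 1) (v₁ * M 1 2 + v₂ * M 2 2) := by
  obtain ⟨x₁, x₂, p, q, r, s, hMe, -⟩ := exists_eq_of_mem_firstBasisStab hM
  ext i j
  fin_cases i <;> fin_cases j <;>
    simp [hMe, eMat, Matrix.mul_apply, Fin.sum_univ_three, add_comm, mul_comm, add_assoc]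

theorem Ssub_le_firstBasisStab (a b u : F) : Ssub F a b u ≤ firstBasisStab F := by
  rw [Ssub, Subgroup.closure_le]
  rintro x (hx | hx | hx) <;> exact mem_firstBasisStab_of_coe_eq hx

theorem Gsub_le_firstBasisStab (a b : F) : Gsub F a b ≤ firstBasisStab F := by
  rw [Gsub, Subgroup.closure_le]
  rintro x (⟨v₁, v₂, hx⟩ | hx | hx | hx) <;> exact mem_firstBasisStab_of_coe_eq hx

theorem eSL_mem_Gsub (a b v₁ v₂ : F) : eSL v₁ v₂ ∈ Gsub F a b :=
  Subgroup.subset_closure (Or.inl ⟨v₁, v₂, rfl⟩)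

section CharacteristicTwo

variable [CharP F 2]

theorem eSL_mul_self (v₁ v₂ : F) : eSL v₁ v₂ * eSL v₁ v₂ = 1 := by
  rw [eSL_mul_eSL, CharTwo.add_self_eq_zero, CharTwo.add_self_eq_zero, eSL_zero]

theorem eSL_inv (v₁ v₂ : F) : (eSL v₁ v₂)⁻¹ = eSL v₁ v₂ :=
  inv_eq_of_mul_eq_one_right (eSL_mul_self v₁ v₂)

-- The system of `exists_coboundary` with all coefficients squared.
theorem exists_coboundary_sq {p q r s : F} (hdet : p * s - q * r = 1) :
    ∃ m₁ m₂ : F, m₁ * (p ^ 2 + 1) + m₂ * r ^ 2 = p * r ∧ m₁ * q ^ 2 + m₂ * (s ^ 2 + 1) = q * s := by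
  have h2 : (2 : F) = 0 := CharTwo.two_eq_zero
  by_cases ht : p + s = 0
  · have hs : s = p := by linear_combination ht - p * h2
    subst hs
    by_cases hq : q = 0
    · subst hq
      refine ⟨0, s / r, ?_, ?_⟩
      · rcases eq_or_ne r 0 with hr | hr
        · simp [hr]
        · field_simp
          ring
      · linear_combination (s / r) * (hdet + h2)
    · refine ⟨s / q, 0, ?_, ?_⟩
      · field_simp
        linear_combination s * hdet + s * h2
      · field_simp
        ring
  · refine ⟨r / (p + s), q / (p + s), ?_, ?_⟩
    · field_simp
      linear_combination r * hdet + (q * r ^ 2 + r - r * p * s) * h2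
    · field_simp
      linear_combination q * hdet + (q ^ 2 * r + q - q * s * p) * h2

variable [PerfectRing F 2]

local notation "ρ" => RingEquiv.symm (frobeniusEquiv F 2)

/- For `A = [[p, q], [r, s]]` in `SL(2, F)`, `δ A = (ρ (p * r), ρ (q * s))` satisfies the cocycle
identity `δ (A * B) = δ A * B + δ B`; this is its first coordinate for `B` with first column
`(x, y)`. -/
theorem frobeniusEquiv_symm_cocycle {p q r s : F} (hdet : p * s - q * r = 1) (x y : F) :
    ρ ((p * x + q * y) * (r * x + s * y)) = ρ (p * r) * x + ρ (q * s) * y + ρ (x * y) := by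
  apply frobenius_inj F 2
  simp only [frobenius_def, CharTwo.add_sq, mul_pow, frobeniusEquiv_symm_pow_p]
  linear_combination x * y * hdet + (x * y * q * r) * (CharTwo.two_eq_zero (R := F))

-- Although `δ` is not a coboundary, each single value `δ A` lies in the image of `n ↦ n * (A + 1)`.
theorem exists_coboundary {p q r s : F} (hdet : p * s - q * r = 1) :
    ∃ n₁ n₂ : F, n₁ * (p + 1) + n₂ * r = ρ (p * r) ∧ n₁ * q + n₂ * (s + 1) = ρ (q * s) := by
  obtain ⟨m₁, m₂, h₁, h₂⟩ := exists_coboundary_sq hdet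
  refine ⟨ρ m₁, ρ m₂, ?_, ?_⟩ <;> apply frobenius_inj F 2 <;>
    simp only [frobenius_def, CharTwo.add_sq, mul_pow, one_pow, frobeniusEquiv_symm_pow_p]
  · exact h₁
  · exact h₂

-- On `firstBasisStab F`, whose elements are `[[1, *], [0, A]]`, this is `M ↦ M * e(c • δ A)`.
noncomputable def twist (c : F) (M : SL(3, F)) : SL(3, F) :=
  M * eSL (c * ρ (M 1 1 * M 2 1)) (c * ρ (M 1 2 * M 2 2))

variable (c : F)

theorem coe_twist_of_coe_eq {M : SL(3, F)} {x₁ x₂ p q r s : F}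
    (hM : (M : Matrix (Fin 3) (Fin 3) F) = !![1, x₁, x₂; 0, p, q; 0, r, s]) :
    (twist c M : Matrix (Fin 3) (Fin 3) F) =
      !![1, x₁ + c * ρ (p * r), x₂ + c * ρ (q * s); 0, p, q; 0, r, s] := by
  ext i j
  fin_cases i <;> fin_cases j <;> simp [twist, hM, eMat, mul_apply, Fin.sum_univ_three, add_comm]

theorem twist_eq_self {M : SL(3, F)} (h21 : M 2 1 = 0) (h12 : M 1 2 = 0) : twist c M = M := by
  simp [twist, h21, h12, eSL_zero]

theorem twist_one : twist c (1 : SL(3, F)) = 1 :=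
  twist_eq_self c (by simp) (by simp)

theorem twist_eSL (v₁ v₂ : F) : twist c (eSL v₁ v₂) = eSL v₁ v₂ :=
  twist_eq_self c (by simp [eMat]) (by simp [eMat])

theorem twist_mul {M N : SL(3, F)} (hM : M ∈ firstBasisStab F) (hN : N ∈ firstBasisStab F) :
    twist c (M * N) = twist c M * twist c N := by
  simp only [twist, mul_assoc]
  rw [← mul_assoc (eSL _ _) N, eSL_mul_of_mem_firstBasisStab hN, mul_assoc N, eSL_mul_eSL]
  obtain ⟨x₁, x₂, p, q, r, s, hMe, hdet⟩ := exists_eq_of_mem_firstBasisStab hM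
  obtain ⟨y₁, y₂, p', q', r', s', hNe, -⟩ := exists_eq_of_mem_firstBasisStab hN
  congr 3 <;>
    simp only [Fin.isValue, Matrix.SpecialLinearGroup.coe_mul, hMe, hNe, mul_apply, of_apply,
      cons_val', cons_val_fin_one, cons_val_one, cons_val_zero, Fin.sum_univ_three, zero_mul,
      zero_add, cons_val]
  · linear_combination c * frobeniusEquiv_symm_cocycle hdet p' r'
  · linear_combination c * frobeniusEquiv_symm_cocycle hdet q' s'

theorem twist_inv {M : SL(3, F)} (hM : M ∈ firstBasisStab F) : twist c M⁻¹ = (twist c M)⁻¹ :=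
  eq_inv_of_mul_eq_one_left <| by
    rw [← twist_mul c (inv_mem hM) hM, inv_mul_cancel, twist_one]

theorem twist_twist {M : SL(3, F)} (hM : M ∈ firstBasisStab F) : twist c (twist c M) = M := by
  refine (twist_mul c hM (eSL_mem_firstBasisStab _ _)).trans ?_
  rw [twist_eSL, twist, mul_assoc, eSL_mul_self, mul_one]

noncomputable def twistEquiv (K : Subgroup SL(3, F)) (hKP : K ≤ firstBasisStab F)
    (hK : ∀ v₁ v₂ : F, eSL v₁ v₂ ∈ K) : K ≃* K where
  toFun x := ⟨twist c x, mul_mem x.2 (hK _ _)⟩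
  invFun x := ⟨twist c x, mul_mem x.2 (hK _ _)⟩
  left_inv x := Subtype.ext (twist_twist c (hKP x.2))
  right_inv x := Subtype.ext (twist_twist c (hKP x.2))
  map_mul' x y := Subtype.ext (twist_mul c (hKP x.2) (hKP y.2))

theorem twist_mem_closure {T T' : Set SL(3, F)} (hT : T ⊆ firstBasisStab F)
    (h : ∀ x ∈ T, twist c x ∈ Subgroup.closure T') {x : SL(3, F)}
    (hx : x ∈ Subgroup.closure T) : twist c x ∈ Subgroup.closure T' := by
  have hTP : Subgroup.closure T ≤ firstBasisStab F := (Subgroup.closure_le _).mpr hT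
  induction hx using Subgroup.closure_induction with
  | mem x hx => exact h x hx
  | one => rw [twist_one]; exact one_mem _
  | mul x y hx hy ihx ihy => rw [twist_mul c (hTP hx) (hTP hy)]; exact mul_mem ihx ihy
  | inv x hx ihx => rw [twist_inv c (hTP hx)]; exact inv_mem ihx

theorem exists_eSL_conj_eq_twist {g : SL(3, F)} (hg : g ∈ firstBasisStab F) :
    ∃ v₁ v₂ : F, eSL v₁ v₂ * g * (eSL v₁ v₂)⁻¹ = twist c g := by
  obtain ⟨x₁, x₂, p, q, r, s, hge, hdet⟩ := exists_eq_of_mem_firstBasisStab hg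
  obtain ⟨n₁, n₂, h₁, h₂⟩ := exists_coboundary hdet
  refine ⟨c * n₁, c * n₂, ?_⟩
  rw [eSL_inv, eSL_mul_of_mem_firstBasisStab hg, mul_assoc, eSL_mul_eSL, twist]
  congr 2 <;>
    simp only [Fin.isValue, hge, of_apply, cons_val', cons_val_one, cons_val_zero, cons_val_fin_one,
      cons_val]
  · linear_combination c * h₁
  · linear_combination c * h₂

theorem twist_of_coe_eq_Xmat (a : F) {x : SL(3, F)}
    (hx : (x : Matrix (Fin 3) (Fin 3) F) = Xmat F a) : twist c x = x :=
  twist_eq_self c (by simp [hx, Xmat]) (by simp [hx, Xmat])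

theorem coe_twist_of_coe_eq_Ymat (a u w : F) {x : SL(3, F)}
    (hx : (x : Matrix (Fin 3) (Fin 3) F) = Ymat F a u) :
    (twist (w * (1 + a)) x : Matrix (Fin 3) (Fin 3) F) = Ymat F a (u + w) := by
  have h₁ : 0 + w * (1 + a) * ρ (1 * 0) = 0 := by simp
  have h₂ : u + u * a + w * (1 + a) * ρ (1 * 1) = u + w + (u + w) * a := by
    rw [mul_one, map_one]
    ring
  rw [coe_twist_of_coe_eq _ hx, h₁, h₂, Ymat]

theorem coe_twist_of_coe_eq_Zmat {a b : F} (ha : 1 + a ≠ 0) (hb : b = ((1 + a) ^ 2)⁻¹)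
    (u w : F) {x : SL(3, F)} (hx : (x : Matrix (Fin 3) (Fin 3) F) = Zmat F a b u) :
    (twist (w * (1 + a)) x : Matrix (Fin 3) (Fin 3) F) = Zmat F a b (u + w) := by
  obtain ⟨β, hβa, hb⟩ : ∃ β : F, (1 + a) * β = 1 ∧ b = β ^ 2 :=
    ⟨(1 + a)⁻¹, mul_inv_cancel₀ ha, by rw [hb, inv_pow]⟩
  have hb₁ : ρ b = β := by rw [hb, frobeniusEquiv_symm_pow]
  have hb₂ : ρ ((b ^ 2 + b + 1) * (b + 1)) = β ^ 3 + 1 := by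
    rw [← frobeniusEquiv_symm_pow F 2 (β ^ 3 + 1), hb]
    congr 1
    linear_combination (β ^ 4 + β ^ 2 - β ^ 3) * (CharTwo.two_eq_zero (R := F))
  have h₁ : u + w * (1 + a) * ρ (b * 1) = u + w := by
    rw [mul_one, hb₁]
    linear_combination w * hβa
  have h₂ : u * a + u * b + u + w * (1 + a) * ρ ((b ^ 2 + b + 1) * (b + 1)) =
      (u + w) * a + (u + w) * b + (u + w) := by
    rw [hb₂]
    linear_combination w * β ^ 2 * hβa - w * hb
  rw [coe_twist_of_coe_eq _ hx, h₁, h₂, Zmat]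

theorem twist_mem_Ssub {a b : F} (ha : 1 + a ≠ 0) (hb : b = ((1 + a) ^ 2)⁻¹) (u w : F)
    {x : SL(3, F)} (hx : x ∈ Ssub F a b u) : twist (w * (1 + a)) x ∈ Ssub F a b (u + w) := by
  refine twist_mem_closure _
    (fun y hy => Ssub_le_firstBasisStab a b u (Subgroup.subset_closure hy)) ?_ hx
  rintro y (hy | hy | hy)
  · rw [twist_of_coe_eq_Xmat _ a hy]
    exact Subgroup.subset_closure (Or.inl hy)
  · exact Subgroup.subset_closure (Or.inr (Or.inl (coe_twist_of_coe_eq_Ymat a u w hy)))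
  · exact Subgroup.subset_closure (Or.inr (Or.inr (coe_twist_of_coe_eq_Zmat ha hb u w hy)))

theorem mem_Ssub_zero_iff_twist_mem {a b : F} (ha : 1 + a ≠ 0) (hb : b = ((1 + a) ^ 2)⁻¹)
    (w : F) {x : SL(3, F)} (hx : x ∈ firstBasisStab F) :
    x ∈ Ssub F a b 0 ↔ twist (w * (1 + a)) x ∈ Ssub F a b w := by
  refine ⟨fun h => by simpa only [zero_add] using twist_mem_Ssub ha hb 0 w h, fun h => ?_⟩
  rw [← twist_twist (w * (1 + a)) hx, ← CharTwo.add_self_eq_zero w]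
  exact twist_mem_Ssub ha hb w w h

end CharacteristicTwo

end SLThree

open SLThree

theorem twisted_stmt14_general {F : Type*} [Field F] [Fintype F] {f : ℕ} (hf : 2 ≤ f)
    (hF : Fintype.card F = 2 ^ f) (a : F)
    (hgen : orderOf a = 2 ^ f - 1) (b : F) (hb : b = (1 + a ^ 2)⁻¹)
    (w w' : F) (g : Matrix.SpecialLinearGroup (Fin 3) F) (hg : g ∈ Gsub F a b) :
    Nat.card {x : Matrix.SpecialLinearGroup (Fin 3) F |
        x ∈ Gsub F a b ∧ x * g * x⁻¹ ∈ Ssub F a b w}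
      = Nat.card {x : Matrix.SpecialLinearGroup (Fin 3) F |
          x ∈ Gsub F a b ∧ x * g * x⁻¹ ∈ Ssub F a b w'} := by
  have : CharP F 2 := charP_of_card_eq_prime_pow hF
  have ha : 1 + a ≠ 0 := by
    intro h
    rw [← neg_eq_of_add_eq_zero_right h, CharTwo.neg_eq, orderOf_one] at hgen
    have : 2 ^ 2 ≤ 2 ^ f := Nat.pow_le_pow_right two_pos hf
    omega
  have hb' : b = ((1 + a) ^ 2)⁻¹ := by rw [hb, CharTwo.add_sq, one_pow]
  suffices H : ∀ v : F, Nat.card {x : SL(3, F) | x ∈ Gsub F a b ∧ x * g * x⁻¹ ∈ Ssub F a b 0} =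
      Nat.card {x : SL(3, F) | x ∈ Gsub F a b ∧ x * g * x⁻¹ ∈ Ssub F a b v} by
    rw [← H w, ← H w']
  intro v
  obtain ⟨v₁, v₂, ht⟩ := exists_eSL_conj_eq_twist (v * (1 + a)) (Gsub_le_firstBasisStab a b hg)
  exact card_conj_mem_eq_of_mulEquiv
    (twistEquiv (v * (1 + a)) _ (Gsub_le_firstBasisStab a b) (eSL_mem_Gsub a b))
    (fun x => mem_Ssub_zero_iff_twist_mem ha hb' v (Gsub_le_firstBasisStab a b x.2))
    (g := ⟨g, hg⟩) (t := ⟨eSL v₁ v₂, eSL_mem_Gsub a b v₁ v₂⟩) (Subtype.ext ht.symm)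

/-- For every `g ∈ G` and all `w, w' ∈ F`, the number of `x ∈ G` with
`x g x⁻¹ ∈ S_w` equals the number of `x ∈ G` with `x g x⁻¹ ∈ S_{w'}`; equivalently, `g`
fixes the same number of cosets in the coset action of `G` on the cosets of `S_w` as in
the coset action on the cosets of `S_{w'}`. -/
theorem twisted_stmt14 {F : Type*} [Field F] [Fintype F] {f : ℕ} (hf : 2 ≤ f)
    (hF : Fintype.card F = 2 ^ f) (a : F) (ha : a ≠ 0)
    (hgen : orderOf a = 2 ^ f - 1) (b : F) (hb : b = (1 + a ^ 2)⁻¹)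
    (w w' : F) (g : Matrix.SpecialLinearGroup (Fin 3) F) (hg : g ∈ Gsub F a b) :
    Nat.card {x : Matrix.SpecialLinearGroup (Fin 3) F |
        x ∈ Gsub F a b ∧ x * g * x⁻¹ ∈ Ssub F a b w}
      = Nat.card {x : Matrix.SpecialLinearGroup (Fin 3) F |
          x ∈ Gsub F a b ∧ x * g * x⁻¹ ∈ Ssub F a b w'} :=
  twisted_stmt14_general hf hF a hgen b hb w w' g hg
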